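/- Let n be odd and not a perfect square, and n = a·b with odd a > b > 1. Then (a+b)/2 ≡ x₁ (mod 2), where x₁ = (n - 4·⌊(n - 2⌊√n⌋)/4⌋ + 1)/2. Hence the value x = (a+b)/2 is reached from x₁ by steps of 2. -/
import Mathlib


/-- Let `n` be odd and not a perfect square, and `n = a*b` with odd `a > b > 1`.
Then `(a+b)/2 ≡ x₁ (mod 2)`, where `x₁ = (n - 4·⌊(n - 2⌊√n⌋)/4⌋ + 1)/2`.
Hence the value `x = (a+b)/2` is reached from `x₁` by steps of `2`. -/
theorem stmt_13 (n a b x₁ : ℕ) (hn : Odd n) (hnsq : ¬ IsSquare n)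
    (hab : n = a * b) (ha : Odd a) (hb : Odd b) (hgt : a > b) (hb1 : 1 < b)
    (hx₁ : x₁ = (n - 4 * ((n - 2 * Nat.sqrt n) / 4) + 1) / 2) :
    (a + b) / 2 ≡ x₁ [MOD 2] := by
  obtain ⟨i, hi⟩ := ha
  obtain ⟨j, hj⟩ := hb
  have hn4 : 4 ≤ n := by subst hab hi hj; nlinarith
  have hs2 : 2 ≤ Nat.sqrt n := Nat.le_sqrt.mpr hn4
  have hss : Nat.sqrt n * Nat.sqrt n ≤ n := by nlinarith [Nat.sqrt_le' n, sq_nonneg (Nat.sqrt n)]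
  have h2s : 2 * Nat.sqrt n ≤ n :=
    le_trans (Nat.mul_le_mul_right _ hs2) hss
  have key : n + 1 = a + b + 4 * (i * j) := by subst hi hj; rw [hab]; ring
  unfold Nat.ModEq
  omega
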